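/- Let (G, v) be a valued abelian group and m ∈ ℕ. For a ∈ G let V_a^m := {x ∈ G : v(a + m·g) < v(x) for all g ∈ G}. Then for all a, b ∈ G one has V_{a+b}^m ⊆ V_a^m ∪ V_b^m; consequently the map val^m (ordering classes by reverse inclusion of the sets V^m) is a pre-valuation on G and induces a valuation on the quotient group G/mG. -/

import Mathlib

/-!
`V_a^m` is the preimage under `v` of the set of strict upper bounds of `v (a + mG)`; this set is
an upper set of the linear order `Γ`, so the `V^m` are totally ordered by inclusion, and it only
depends on the coset `a + mG`. The ultrametric inequality `min (v s) (v t) ≤ v (s + t)` applied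
to `s = a + m • g`, `t = b + m • h` gives `V_{a+b}^m ⊆ V_a^m ∪ V_b^m`. Finally `V_0^m = ∅` because
`v 0 = ⊤`, while `0 ∈ V_a^m` exactly when `a + mG` avoids `0`.
-/

universe u

/-- `v : G → Γ` is a valuation making the abelian group `G` a valued abelian group:
`Γ` is a linear order with greatest element `⊤` (denoted `∞` in the paper), `v` is
surjective, `v g = ⊤` iff `g = 0`, and `v (g - h) ≥ min (v g) (v h)`. -/
structure IsValuedGroup {G Γ : Type*} [AddCommGroup G] [LinearOrder Γ] [OrderTop Γ]
    (v : G → Γ) : Prop where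
  surjective : Function.Surjective v
  eq_top_iff : ∀ g : G, v g = ⊤ ↔ g = 0
  min_le_sub : ∀ g h : G, min (v g) (v h) ≤ v (g - h)

/-- For a valued abelian group `(G, v)`, `m ∈ ℕ` and `a ∈ G`, the set
`V_a^m = {x ∈ G : v (a + m • g) < v x for all g ∈ G}`, i.e. the largest convex subgroup
of `G` not meeting `a + mG` (and `∅` if `a ∈ mG`). -/
def Vm {G Γ : Type*} [AddCommGroup G] [LinearOrder Γ] (v : G → Γ) (m : ℕ) (a : G) :
    Set G :=
  {x : G | ∀ g : G, v (a + m • g) < v x}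

section Vm

variable {G Γ : Type*} [AddCommGroup G] [LinearOrder Γ] (v : G → Γ) (m : ℕ)

theorem Vm_add_nsmul (a y : G) : Vm v m (a + m • y) = Vm v m a := by
  ext x
  refine ⟨fun hx g => ?_, fun hx g => ?_⟩
  · simpa [smul_sub, add_sub_cancel] using hx (g - y)
  · simpa [smul_add, add_assoc] using hx (y + g)

theorem Vm_eq_of_sub_eq_nsmul {a b y : G} (h : a - b = m • y) : Vm v m a = Vm v m b := by
  rw [← Vm_add_nsmul v m b y, ← h, add_sub_cancel]

theorem Vm_subset_or_subset (a b : G) : Vm v m a ⊆ Vm v m b ∨ Vm v m b ⊆ Vm v m a := by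
  have isUpperSet (c : G) : IsUpperSet {γ : Γ | ∀ g : G, v (c + m • g) < γ} :=
    fun _ _ hle hγ g => (hγ g).trans_le hle
  exact ((isUpperSet a).total (isUpperSet b)).imp
    (Set.preimage_mono (f := v)) (Set.preimage_mono (f := v))

end Vm

namespace IsValuedGroup

variable {G Γ : Type*} [AddCommGroup G] [LinearOrder Γ] [OrderTop Γ] {v : G → Γ}

theorem map_zero (hv : IsValuedGroup v) : v 0 = ⊤ :=
  (hv.eq_top_iff 0).mpr rfl

theorem map_neg (hv : IsValuedGroup v) (g : G) : v (-g) = v g := by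
  have le_neg (t : G) : v t ≤ v (-t) := by
    simpa [hv.map_zero] using hv.min_le_sub 0 t
  exact le_antisymm (by simpa using le_neg (-g)) (le_neg g)

theorem min_le_add (hv : IsValuedGroup v) (g h : G) : min (v g) (v h) ≤ v (g + h) := by
  simpa [hv.map_neg] using hv.min_le_sub g (-h)

theorem Vm_add_subset_union (hv : IsValuedGroup v) (m : ℕ) (a b : G) :
    Vm v m (a + b) ⊆ Vm v m a ∪ Vm v m b := by
  intro x hx
  by_contra hx'
  simp only [Set.mem_union, not_or, Vm, Set.mem_ofPred_eq, not_forall, not_lt] at hx'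
  obtain ⟨⟨g, hg⟩, ⟨h, hh⟩⟩ := hx'
  have hsum : a + m • g + (b + m • h) = a + b + m • (g + h) := by
    rw [smul_add]; abel
  have := hv.min_le_add (a + m • g) (b + m • h)
  rw [hsum] at this
  exact (hx (g + h)).not_ge ((le_min hg hh).trans this)

theorem Vm_zero (hv : IsValuedGroup v) (m : ℕ) : Vm v m (0 : G) = ∅ :=
  Set.eq_empty_of_forall_notMem fun x hx => by
    simpa [hv.map_zero] using hx 0

theorem zero_mem_Vm_iff (hv : IsValuedGroup v) (m : ℕ) (a : G) :
    0 ∈ Vm v m a ↔ ∀ g : G, a + m • g ≠ 0 := by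
  simp only [Vm, Set.mem_ofPred_eq, hv.map_zero, lt_top_iff_ne_top, ne_eq, hv.eq_top_iff]

theorem Vm_eq_empty_iff (hv : IsValuedGroup v) (m : ℕ) (a : G) :
    Vm v m a = ∅ ↔ ∃ y : G, a = m • y := by
  constructor
  · intro h
    have : 0 ∉ Vm v m a := h ▸ Set.notMem_empty 0
    obtain ⟨g, hg⟩ : ∃ g : G, a + m • g = 0 := by
      simpa [hv.zero_mem_Vm_iff] using this
    exact ⟨-g, by rw [smul_neg, eq_neg_iff_add_eq_zero, hg]⟩
  · rintro ⟨y, rfl⟩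
    rw [← zero_add (m • y), Vm_add_nsmul, hv.Vm_zero]

end IsValuedGroup

/-- For all `a, b ∈ G` one has `V_{a+b}^m ⊆ V_a^m ∪ V_b^m`; consequently
the map `val^m` (classes ordered by reverse inclusion of the sets `V^m`) is a pre-valuation
on `G` and induces a valuation on the quotient group `G/mG`: the sets `V^m` are well defined
modulo `mG`, are linearly ordered by reverse inclusion, and `V_a^m` equals the `V^m`-set of
`0` (the "value ∞") exactly when `a ∈ mG`. -/
theorem Vm_add_subset_union {G Γ : Type*} [AddCommGroup G] [LinearOrder Γ] [OrderTop Γ]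
    (v : G → Γ) (hv : IsValuedGroup v) (m : ℕ) :
    (∀ a b : G, Vm v m (a + b) ⊆ Vm v m a ∪ Vm v m b) ∧
    (∀ a b : G, (∃ y : G, a - b = m • y) → Vm v m a = Vm v m b) ∧
    (∀ a b : G, Vm v m a ⊆ Vm v m b ∨ Vm v m b ⊆ Vm v m a) ∧
    (∀ a : G, Vm v m a = Vm v m 0 ↔ ∃ y : G, a = m • y) := by
  refine ⟨hv.Vm_add_subset_union m, fun a b ⟨y, hy⟩ => Vm_eq_of_sub_eq_nsmul v m hy,
    Vm_subset_or_subset v m, fun a => ?_⟩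
  rw [hv.Vm_zero m]
  exact hv.Vm_eq_empty_iff m a
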